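/- arXiv:2201.07524 — 6 statements merged into one kernel-verified Lean document; each statement's English description precedes it below -/
import Mathlib

section
/- Let π^s be a minimizer of F_λ over couplings with strictly positive entries and π^W a minimizer of ∑_{ij} π_ij c_ij over couplings. Then 0 ≤ s̃_λ - W ≤ (1/λ)(H(π^s) - H(π^W)). (Proposition 3.4, first inequality.) -/
open Finset

/-- Entropy of a matrix (convention `0 * log 0 = 0` holds since `Real.log 0 = 0`). -/
noncomputable def entM {n m : ℕ} (π : Fin n → Fin m → ℝ) : ℝ :=
  -∑ i, ∑ j, π i j * Real.log (π i j)

/-- A coupling of `(p, pt)`: nonnegative entries, row sums `p`, column sums `pt`. -/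
def IsCoupling {n m : ℕ} (p : Fin n → ℝ) (pt : Fin m → ℝ) (π : Fin n → Fin m → ℝ) : Prop :=
  (∀ i j, 0 ≤ π i j) ∧ (∀ i, ∑ j, π i j = p i) ∧ (∀ j, ∑ i, π i j = pt j)

/-- Transport cost of a plan. -/
noncomputable def cost {n m : ℕ} (c π : Fin n → Fin m → ℝ) : ℝ :=
  ∑ i, ∑ j, π i j * c i j

/-- The Sinkhorn (entropy-regularized) objective. -/
noncomputable def Fobj {n m : ℕ} (lam : ℝ) (c π : Fin n → Fin m → ℝ) : ℝ :=
  cost c π - (1 / lam) * entM π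

/-- Proposition 3.4, first inequality: `0 ≤ s̃_λ - W ≤ (1/λ)(H(πˢ) - H(π^W))`. -/
theorem sinkhorn_upper_bound_gap {n m : ℕ} (hn : 1 ≤ n) (hm : 1 ≤ m)
    (p : Fin n → ℝ) (pt : Fin m → ℝ)
    (hp0 : ∀ i, 0 ≤ p i) (hpt0 : ∀ j, 0 ≤ pt j)
    (hp1 : ∑ i, p i = 1) (hpt1 : ∑ j, pt j = 1)
    (c : Fin n → Fin m → ℝ) (hc : ∀ i j, 0 ≤ c i j)
    (lam : ℝ) (hlam : 0 < lam)
    (πs : Fin n → Fin m → ℝ)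
    (hπs : IsCoupling p pt πs) (hπspos : ∀ i j, 0 < πs i j)
    (hπsmin : ∀ π, IsCoupling p pt π → (∀ i j, 0 < π i j) →
      Fobj lam c πs ≤ Fobj lam c π)
    (πW : Fin n → Fin m → ℝ)
    (hπW : IsCoupling p pt πW)
    (hπWmin : ∀ π, IsCoupling p pt π → cost c πW ≤ cost c π) :
    0 ≤ cost c πs - cost c πW ∧
      cost c πs - cost c πW ≤ (1 / lam) * (entM πs - entM πW) := by
  constructor
  · have := hπWmin πs hπs
    linarith
  · -- key: Fobj πs ≤ Fobj πW, by perturbation π_t = (1-t)πW + tπs and continuity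
    set πt : ℝ → Fin n → Fin m → ℝ := fun t i j => (1 - t) * πW i j + t * πs i j with hπt
    have hcoup : ∀ t, 0 < t → t ≤ 1 → IsCoupling p pt (πt t) := by
      intro t ht0 ht1
      obtain ⟨hW0, hWr, hWc⟩ := hπW
      obtain ⟨hs0, hsr, hsc⟩ := hπs
      refine ⟨fun i j => ?_, fun i => ?_, fun j => ?_⟩
      · have h1 : 0 ≤ (1 - t) * πW i j := mul_nonneg (by linarith) (hW0 i j)
        have h2 : 0 ≤ t * πs i j := mul_nonneg ht0.le (hs0 i j)
        simp only [hπt]; linarith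
      · simp only [hπt, Finset.sum_add_distrib, ← Finset.mul_sum, hWr, hsr]; ring
      · simp only [hπt, Finset.sum_add_distrib, ← Finset.mul_sum, hWc, hsc]; ring
    have hpos : ∀ t, 0 < t → t ≤ 1 → ∀ i j, 0 < πt t i j := by
      intro t ht0 ht1 i j
      have h1 : 0 ≤ (1 - t) * πW i j := mul_nonneg (by linarith) (hπW.1 i j)
      have h2 : 0 < t * πs i j := mul_pos ht0 (hπspos i j)
      simp only [hπt]; linarith
    have hle : ∀ t, 0 < t → t ≤ 1 → Fobj lam c πs ≤ Fobj lam c (πt t) :=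
      fun t ht0 ht1 => hπsmin _ (hcoup t ht0 ht1) (hpos t ht0 ht1)
    have hentry : ∀ (i : Fin n) (j : Fin m), Continuous (fun t => πt t i j) := by
      intro i j
      exact ((continuous_const.sub continuous_id).mul continuous_const).add
        (continuous_id.mul continuous_const)
    have hcont : Continuous (fun t => Fobj lam c (πt t)) := by
      simp only [Fobj, cost, entM]
      apply Continuous.sub
      · exact continuous_finset_sum _ fun i _ => continuous_finset_sum _ fun j _ =>
          (hentry i j).mul continuous_const
      · exact continuous_const.mul (Continuous.neg (continuous_finset_sum _ fun i _ =>
          continuous_finset_sum _ fun j _ => Real.continuous_mul_log.comp (hentry i j)))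
    have hlim : Filter.Tendsto (fun t => Fobj lam c (πt t)) (nhdsWithin 0 (Set.Ioi 0))
        (nhds (Fobj lam c (πt 0))) :=
      (hcont.continuousAt).continuousWithinAt.tendsto
    have hFle : Fobj lam c πs ≤ Fobj lam c (πt 0) := by
      refine ge_of_tendsto hlim ?_
      have h01 : Set.Ioo (0:ℝ) 1 ∈ nhdsWithin (0:ℝ) (Set.Ioi 0) :=
        Ioo_mem_nhdsGT_of_mem (by norm_num : (0:ℝ) ∈ Set.Ico (0:ℝ) 1)
      filter_upwards [h01] with t ht
      exact hle t ht.1 ht.2.le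
    have hπt0 : πt 0 = πW := by
      funext i j; simp [hπt]
    rw [hπt0] at hFle
    simp only [Fobj] at hFle
    linarith
end

section
/- Let π^s be a minimizer of F_λ over couplings with strictly positive entries. Then 0 ≤ W - s_λ ≤ (1/λ) H(π^s) ≤ (1/λ) H(p⊗p̃), where (p⊗p̃)_ij = p_i p̃_j. (Proposition 3.4, second inequality.) -/
open Finset

lemma entM_nonneg_of_le_one {n m : ℕ} (π : Fin n → Fin m → ℝ)
    (h0 : ∀ i j, 0 ≤ π i j) (h1 : ∀ i j, π i j ≤ 1) : 0 ≤ entM π := by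
  unfold entM
  rw [neg_nonneg]
  apply Finset.sum_nonpos; intro i _
  apply Finset.sum_nonpos; intro j _
  have := Real.log_nonpos (h0 i j) (h1 i j)
  nlinarith [h0 i j]

lemma cost_convex {n m : ℕ} (c πW πs : Fin n → Fin m → ℝ) (δ : ℝ) :
    cost c (fun i j => (1 - δ) * πW i j + δ * πs i j)
      = (1 - δ) * cost c πW + δ * cost c πs := by
  unfold cost
  rw [Finset.mul_sum, Finset.mul_sum, ← Finset.sum_add_distrib]
  refine Finset.sum_congr rfl fun i _ => ?_
  rw [Finset.mul_sum, Finset.mul_sum, ← Finset.sum_add_distrib]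
  exact Finset.sum_congr rfl fun j _ => by ring

/-- Proposition 3.4, second inequality:
`0 ≤ W - s_λ ≤ (1/λ) H(πˢ) ≤ (1/λ) H(p ⊗ p̃)`. -/
theorem sinkhorn_lower_bound_gap {n m : ℕ} (hn : 1 ≤ n) (hm : 1 ≤ m)
    (p : Fin n → ℝ) (pt : Fin m → ℝ)
    (hp0 : ∀ i, 0 ≤ p i) (hpt0 : ∀ j, 0 ≤ pt j)
    (hp1 : ∑ i, p i = 1) (hpt1 : ∑ j, pt j = 1)
    (c : Fin n → Fin m → ℝ) (hc : ∀ i j, 0 ≤ c i j)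
    (lam : ℝ) (hlam : 0 < lam)
    (πs : Fin n → Fin m → ℝ)
    (hπs : IsCoupling p pt πs) (hπspos : ∀ i j, 0 < πs i j)
    (hπsmin : ∀ π, IsCoupling p pt π → (∀ i j, 0 < π i j) →
      Fobj lam c πs ≤ Fobj lam c π)
    (πW : Fin n → Fin m → ℝ)
    (hπW : IsCoupling p pt πW)
    (hπWmin : ∀ π, IsCoupling p pt π → cost c πW ≤ cost c π) :
    0 ≤ cost c πW - Fobj lam c πs ∧
      cost c πW - Fobj lam c πs ≤ (1 / lam) * entM πs ∧
      (1 / lam) * entM πs ≤ (1 / lam) * entM (fun i j => p i * pt j) := by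
  obtain ⟨hπs0, hπsr, hπsc⟩ := hπs
  obtain ⟨hπW0, hπWr, hπWc⟩ := hπW
  have hm' : Nonempty (Fin m) := ⟨⟨0, hm⟩⟩
  have hn' : Nonempty (Fin n) := ⟨⟨0, hn⟩⟩
  have hppos : ∀ i, 0 < p i := fun i => by
    rw [← hπsr i]; exact Finset.sum_pos (fun j _ => hπspos i j) Finset.univ_nonempty
  have hptpos : ∀ j, 0 < pt j := fun j => by
    rw [← hπsc j]; exact Finset.sum_pos (fun i _ => hπspos i j) Finset.univ_nonempty
  have hp_le1 : ∀ i, p i ≤ 1 := fun i => by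
    rw [← hp1]
    exact Finset.single_le_sum (fun i _ => hp0 i) (Finset.mem_univ i)
  have hlaminv : (0:ℝ) < 1 / lam := by positivity
  -- entries of any coupling are ≤ 1
  have hentry_le1 : ∀ (π : Fin n → Fin m → ℝ), IsCoupling p pt π → ∀ i j, π i j ≤ 1 := by
    intro π ⟨h0, hr, _⟩ i j
    calc π i j ≤ ∑ j', π i j' :=
          Finset.single_le_sum (fun j' _ => h0 i j') (Finset.mem_univ j)
      _ = p i := hr i
      _ ≤ 1 := hp_le1 i
  -- cost πW ≤ cost πs
  have hWle : cost c πW ≤ cost c πs := hπWmin πs ⟨hπs0, hπsr, hπsc⟩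
  -- Part 1 : Fobj lam c πs ≤ cost c πW
  have part1 : Fobj lam c πs ≤ cost c πW := by
    apply le_of_forall_pos_le_add
    intro ε hε
    set D := cost c πs - cost c πW with hD
    have hD0 : 0 ≤ D := by simp [hD]; linarith
    set δ := min 1 (ε / (D + 1)) with hδdef
    have hδpos : 0 < δ := lt_min one_pos (by positivity)
    have hδ1 : δ ≤ 1 := min_le_left _ _
    set πδ : Fin n → Fin m → ℝ := fun i j => (1 - δ) * πW i j + δ * πs i j with hπδ
    have hcoup : IsCoupling p pt πδ := by
      refine ⟨fun i j => ?_, fun i => ?_, fun j => ?_⟩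
      · simp only [hπδ]; have := hπW0 i j; have := (hπspos i j).le; nlinarith
      · simp only [hπδ]
        rw [Finset.sum_add_distrib, ← Finset.mul_sum, ← Finset.mul_sum, hπsr i, hπWr i]; ring
      · simp only [hπδ]
        rw [Finset.sum_add_distrib, ← Finset.mul_sum, ← Finset.mul_sum, hπsc j, hπWc j]; ring
    have hposδ : ∀ i j, 0 < πδ i j := by
      intro i j
      simp only [hπδ]
      have h1 := hπW0 i j; have h2 := hπspos i j
      have : 0 < δ * πs i j := by positivity
      nlinarith
    have hent : 0 ≤ entM πδ :=
      entM_nonneg_of_le_one πδ hcoup.1 (hentry_le1 πδ hcoup)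
    have hmin := hπsmin πδ hcoup hposδ
    have hcostδ : cost c πδ = (1 - δ) * cost c πW + δ * cost c πs := cost_convex c πW πs δ
    have hδD : δ * D ≤ ε := by
      have h1 : δ ≤ ε / (D + 1) := min_le_right _ _
      have h2 : δ * D ≤ (ε / (D + 1)) * D := by
        apply mul_le_mul_of_nonneg_right h1 hD0
      have h3 : (ε / (D + 1)) * D ≤ ε := by
        rw [div_mul_eq_mul_div, div_le_iff₀ (by linarith)]
        nlinarith
      exact h2.trans h3
    have : Fobj lam c πδ ≤ cost c πδ := by
      unfold Fobj; nlinarith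
    have hcδ : cost c πδ ≤ cost c πW + ε := by
      rw [hcostδ]; simp only [hD] at hδD ⊢; nlinarith
    linarith [hmin]
  -- Part 2 : cost c πW ≤ cost c πs, rephrase
  -- Part 3 : entM πs ≤ entM (p ⊗ pt)
  have hA : ∑ i, ∑ j, πs i j * Real.log (p i * pt j)
      = ∑ i, p i * Real.log (p i) + ∑ j, pt j * Real.log (pt j) := by
    have step : ∀ i, ∑ j, πs i j * Real.log (p i * pt j)
        = p i * Real.log (p i) + ∑ j, πs i j * Real.log (pt j) := by
      intro i
      have : ∀ j, πs i j * Real.log (p i * pt j)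
          = πs i j * Real.log (p i) + πs i j * Real.log (pt j) := by
        intro j
        rw [Real.log_mul (hppos i).ne' (hptpos j).ne']; ring
      rw [Finset.sum_congr rfl (fun j _ => this j), Finset.sum_add_distrib,
        ← Finset.sum_mul, hπsr i, mul_comm]
    rw [Finset.sum_congr rfl (fun i _ => step i), Finset.sum_add_distrib]
    congr 1
    rw [Finset.sum_comm]
    refine Finset.sum_congr rfl fun j _ => ?_
    rw [← Finset.sum_mul, hπsc j, mul_comm]
  have hB : entM (fun i j => p i * pt j)
      = -(∑ i, p i * Real.log (p i)) - ∑ j, pt j * Real.log (pt j) := by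
    unfold entM
    have step : ∀ i, ∑ j, p i * pt j * Real.log (p i * pt j)
        = p i * Real.log (p i) + p i * ∑ j, pt j * Real.log (pt j) := by
      intro i
      have : ∀ j, p i * pt j * Real.log (p i * pt j)
          = (p i * Real.log (p i)) * pt j + p i * (pt j * Real.log (pt j)) := by
        intro j
        rw [Real.log_mul (hppos i).ne' (hptpos j).ne']; ring
      rw [Finset.sum_congr rfl (fun j _ => this j), Finset.sum_add_distrib,
        ← Finset.mul_sum, ← Finset.mul_sum, hpt1, mul_one]
    rw [Finset.sum_congr rfl (fun i _ => step i), Finset.sum_add_distrib,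
      ← Finset.sum_mul, hp1]
    ring
  -- Gibbs inequality
  have hGibbs : ∑ i, ∑ j, πs i j * (Real.log (p i * pt j) - Real.log (πs i j))
      ≤ 0 := by
    have hterm : ∀ i j, πs i j * (Real.log (p i * pt j) - Real.log (πs i j))
        ≤ p i * pt j - πs i j := by
      intro i j
      have hx : 0 < p i * pt j / πs i j :=
        div_pos (mul_pos (hppos i) (hptpos j)) (hπspos i j)
      have hlog := Real.log_le_sub_one_of_pos hx
      rw [Real.log_div (mul_pos (hppos i) (hptpos j)).ne' (hπspos i j).ne'] at hlog
      have hπ := hπspos i j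
      calc πs i j * (Real.log (p i * pt j) - Real.log (πs i j))
          ≤ πs i j * (p i * pt j / πs i j - 1) :=
            mul_le_mul_of_nonneg_left hlog hπ.le
        _ = p i * pt j - πs i j := by field_simp
    calc ∑ i, ∑ j, πs i j * (Real.log (p i * pt j) - Real.log (πs i j))
        ≤ ∑ i, ∑ j, (p i * pt j - πs i j) :=
          Finset.sum_le_sum fun i _ => Finset.sum_le_sum fun j _ => hterm i j
      _ = 0 := by
          have h1 : ∑ i, ∑ j, p i * pt j = 1 := by
            simp only [← Finset.mul_sum, hpt1, mul_one, hp1]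
          have h2 : ∑ i, ∑ j, πs i j = 1 := by
            simp only [hπsr, hp1]
          simp only [Finset.sum_sub_distrib, h1, h2, sub_self]
  have part3 : entM πs ≤ entM (fun i j => p i * pt j) := by
    have hexp : ∑ i, ∑ j, πs i j * (Real.log (p i * pt j) - Real.log (πs i j))
        = (∑ i, ∑ j, πs i j * Real.log (p i * pt j))
          - ∑ i, ∑ j, πs i j * Real.log (πs i j) := by
      rw [← Finset.sum_sub_distrib]
      refine Finset.sum_congr rfl fun i _ => ?_
      rw [← Finset.sum_sub_distrib]
      exact Finset.sum_congr rfl fun j _ => by ring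
    have hG := hGibbs
    rw [hexp, hA] at hG
    rw [hB]
    unfold entM
    linarith
  refine ⟨by unfold Fobj at part1 ⊢; linarith, ?_, ?_⟩
  · unfold Fobj; linarith
  · exact mul_le_mul_of_nonneg_left part3 hlaminv.le
end

section
/- Both Sinkhorn divergences converge to the Wasserstein cost as the regularization parameter tends to infinity: for minimizers π^s_λ of F_λ over strictly positive couplings (for each λ > 0), one has |s̃_λ - W| ≤ (log n + log ñ)/λ and |W - s_λ| ≤ (log n + log ñ)/λ, hence s̃_λ → W and s_λ → W as λ → ∞. -/
/-!
The optimal plan `πW` and the Sinkhorn plan `πs` are both couplings, so `W ≤ s̃_λ`. Positive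
couplings are dense among all couplings (follow the segment from any coupling to `πs 1`) and
`F_λ` is continuous, so `πs` also beats `πW`: `s̃_λ - H(πs)/λ ≤ W - H(πW)/λ`. The entropy of a
coupling lies between `0` and `log n + log ñ` (Jensen for the concave `t ↦ -t log t`), and the
two bounds follow; they force both limits.
-/

open Finset

open Filter Topology

section Entropy

open Real

lemma sum_negMulLog_nonneg {ι : Type*} [Fintype ι] {w : ι → ℝ} (h0 : ∀ i, 0 ≤ w i)
    (h1 : ∑ i, w i = 1) : 0 ≤ ∑ i, negMulLog (w i) :=
  sum_nonneg fun i _ ↦ negMulLog_nonneg (h0 i) (h1 ▸ single_le_sum (fun j _ ↦ h0 j) (mem_univ i))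

lemma sum_negMulLog_le_log_card {ι : Type*} [Fintype ι] {w : ι → ℝ} (h0 : ∀ i, 0 ≤ w i)
    (h1 : ∑ i, w i = 1) : ∑ i, negMulLog (w i) ≤ log (Fintype.card ι) := by
  have hN : (0 : ℝ) < Fintype.card ι := by
    rcases isEmpty_or_nonempty ι with _ | _
    · simp at h1
    · exact_mod_cast Fintype.card_pos
  have jensen := concaveOn_negMulLog.le_map_sum (t := univ) (w := fun _ ↦ (Fintype.card ι : ℝ)⁻¹)
    (p := w) (fun _ _ ↦ by positivity) (by simp [hN.ne']) (fun i _ ↦ Set.mem_Ici.2 (h0 i))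
  have hinv : negMulLog (Fintype.card ι : ℝ)⁻¹ = (Fintype.card ι : ℝ)⁻¹ * log (Fintype.card ι) := by
    simp [negMulLog, log_inv]
  simp only [smul_eq_mul, ← mul_sum, h1, mul_one, hinv] at jensen
  exact (mul_le_mul_iff_right₀ (inv_pos.2 hN)).1 jensen

end Entropy

lemma entM_eq_sum_negMulLog {n m : ℕ} (π : Fin n → Fin m → ℝ) :
    entM π = ∑ x : Fin n × Fin m, Real.negMulLog (π x.1 x.2) := by
  simp [entM, Real.negMulLog, Fintype.sum_prod_type]

lemma entM_nonneg {n m : ℕ} {π : Fin n → Fin m → ℝ} (h0 : ∀ i j, 0 ≤ π i j)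
    (h1 : ∑ i, ∑ j, π i j = 1) : 0 ≤ entM π := by
  rw [entM_eq_sum_negMulLog]
  exact sum_negMulLog_nonneg (fun x ↦ h0 x.1 x.2) (by rwa [Fintype.sum_prod_type])

lemma entM_le_log_add_log {n m : ℕ} {π : Fin n → Fin m → ℝ} (h0 : ∀ i j, 0 ≤ π i j)
    (h1 : ∑ i, ∑ j, π i j = 1) : entM π ≤ Real.log n + Real.log m := by
  have hn : (n : ℝ) ≠ 0 := Nat.cast_ne_zero.2 (by rintro rfl; simp at h1)
  have hm : (m : ℝ) ≠ 0 := Nat.cast_ne_zero.2 (by rintro rfl; simp at h1)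
  rw [entM_eq_sum_negMulLog, ← Real.log_mul hn hm]
  simpa using sum_negMulLog_le_log_card (w := fun x : Fin n × Fin m ↦ π x.1 x.2)
    (fun x ↦ h0 x.1 x.2) (by rwa [Fintype.sum_prod_type])

lemma continuous_Fobj {n m : ℕ} (lam : ℝ) (c : Fin n → Fin m → ℝ) : Continuous (Fobj lam c) := by
  unfold Fobj cost entM
  fun_prop

section Couplings

variable {n m : ℕ} {p : Fin n → ℝ} {pt : Fin m → ℝ}

lemma IsCoupling.sum_sum_eq_one {π : Fin n → Fin m → ℝ} (hπ : IsCoupling p pt π)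
    (hp1 : ∑ i, p i = 1) : ∑ i, ∑ j, π i j = 1 := by
  simp only [hπ.2.1, hp1]

lemma convex_setOf_isCoupling : Convex ℝ {π | IsCoupling p pt π} := by
  rintro π ⟨h0, hrow, hcol⟩ σ ⟨h0', hrow', hcol'⟩ a b ha hb hab
  refine ⟨fun i j ↦ ?_, fun i ↦ ?_, fun j ↦ ?_⟩
  · simp only [Pi.add_apply, Pi.smul_apply, smul_eq_mul]
    exact add_nonneg (mul_nonneg ha (h0 i j)) (mul_nonneg hb (h0' i j))
  · simp [sum_add_distrib, ← mul_sum, hrow, hrow', ← add_mul, hab]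
  · simp [sum_add_distrib, ← mul_sum, hcol, hcol', ← add_mul, hab]

lemma openSegment_subset_setOf_isCoupling_pos {π Q : Fin n → Fin m → ℝ}
    (hπ : IsCoupling p pt π) (hQ : IsCoupling p pt Q) (hQpos : ∀ i j, 0 < Q i j) :
    openSegment ℝ π Q ⊆ {σ | IsCoupling p pt σ ∧ ∀ i j, 0 < σ i j} := by
  rintro _ ⟨a, b, ha, hb, hab, rfl⟩
  exact ⟨convex_setOf_isCoupling hπ hQ ha.le hb.le hab, fun i j ↦
    add_pos_of_nonneg_of_pos (mul_nonneg ha.le (hπ.1 i j)) (mul_pos hb (hQpos i j))⟩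

lemma mem_closure_setOf_isCoupling_pos {π Q : Fin n → Fin m → ℝ}
    (hπ : IsCoupling p pt π) (hQ : IsCoupling p pt Q) (hQpos : ∀ i j, 0 < Q i j) :
    π ∈ closure {σ | IsCoupling p pt σ ∧ ∀ i j, 0 < σ i j} :=
  closure_mono (openSegment_subset_setOf_isCoupling_pos hπ hQ hQpos)
    (segment_subset_closure_openSegment (left_mem_segment ℝ π Q))

lemma Fobj_le_of_le_on_pos_couplings {lam : ℝ} {c π πs Q : Fin n → Fin m → ℝ}
    (hmin : ∀ σ, IsCoupling p pt σ → (∀ i j, 0 < σ i j) → Fobj lam c πs ≤ Fobj lam c σ)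
    (hQ : IsCoupling p pt Q) (hQpos : ∀ i j, 0 < Q i j) (hπ : IsCoupling p pt π) :
    Fobj lam c πs ≤ Fobj lam c π :=
  closure_minimal (fun σ hσ ↦ hmin σ hσ.1 hσ.2)
    (isClosed_le continuous_const (continuous_Fobj lam c))
    (mem_closure_setOf_isCoupling_pos hπ hQ hQpos)

end Couplings

section Bounds

variable {n m : ℕ} {lam L : ℝ} {c π πW : Fin n → Fin m → ℝ}

lemma Fobj_eq_cost_sub_entM_div : Fobj lam c π = cost c π - entM π / lam := by
  rw [Fobj, one_div_mul_eq_div]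

lemma abs_cost_sub_cost_le (hlam : 0 < lam) (hW : cost c πW ≤ cost c π)
    (hF : Fobj lam c π ≤ Fobj lam c πW) (hπW : 0 ≤ entM πW) (hπ : entM π ≤ L) :
    |cost c π - cost c πW| ≤ L / lam := by
  simp only [Fobj_eq_cost_sub_entM_div] at hF
  have := div_nonneg hπW hlam.le
  have := div_le_div_of_nonneg_right hπ hlam.le
  rw [abs_of_nonneg (sub_nonneg.2 hW)]
  linarith

lemma abs_cost_sub_Fobj_le (hlam : 0 < lam) (hW : cost c πW ≤ cost c π)
    (hF : Fobj lam c π ≤ Fobj lam c πW) (hπW : 0 ≤ entM πW) (hπ : entM π ≤ L) :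
    |cost c πW - Fobj lam c π| ≤ L / lam := by
  simp only [Fobj_eq_cost_sub_entM_div] at hF ⊢
  have := div_nonneg hπW hlam.le
  have := div_le_div_of_nonneg_right hπ hlam.le
  rw [abs_of_nonneg (by linarith)]
  linarith

end Bounds

lemma tendsto_of_abs_sub_le_div {f : ℝ → ℝ} {a C : ℝ} (h : ∀ x > 0, |f x - a| ≤ C / x) :
    Tendsto f atTop (𝓝 a) :=
  tendsto_iff_dist_tendsto_zero.2 <| squeeze_zero' (.of_forall fun _ ↦ dist_nonneg)
    ((eventually_gt_atTop 0).mono fun x hx ↦ h x hx) (tendsto_const_nhds.div_atTop tendsto_id)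

theorem sinkhorn_tendsto_wasserstein_general {n m : ℕ}
    (p : Fin n → ℝ) (pt : Fin m → ℝ)
    (hp1 : ∑ i, p i = 1)
    (c : Fin n → Fin m → ℝ)
    (πW : Fin n → Fin m → ℝ)
    (hπW : IsCoupling p pt πW)
    (hπWmin : ∀ π, IsCoupling p pt π → cost c πW ≤ cost c π)
    (πs : ℝ → Fin n → Fin m → ℝ)
    (hπs : ∀ lam > (0 : ℝ), IsCoupling p pt (πs lam) ∧ (∀ i j, 0 < πs lam i j) ∧
      ∀ π, IsCoupling p pt π → (∀ i j, 0 < π i j) →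
        Fobj lam c (πs lam) ≤ Fobj lam c π) :
    (∀ lam > (0 : ℝ),
        |cost c (πs lam) - cost c πW| ≤ (Real.log n + Real.log m) / lam ∧
        |cost c πW - Fobj lam c (πs lam)| ≤ (Real.log n + Real.log m) / lam) ∧
      Filter.Tendsto (fun lam => cost c (πs lam)) Filter.atTop (nhds (cost c πW)) ∧
      Filter.Tendsto (fun lam => Fobj lam c (πs lam)) Filter.atTop (nhds (cost c πW)) := by
  obtain ⟨hQ, hQpos, -⟩ := hπs 1 one_pos
  have hπW0 : 0 ≤ entM πW := entM_nonneg hπW.1 (hπW.sum_sum_eq_one hp1)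
  have bounds : ∀ lam > (0 : ℝ),
      |cost c (πs lam) - cost c πW| ≤ (Real.log n + Real.log m) / lam ∧
      |cost c πW - Fobj lam c (πs lam)| ≤ (Real.log n + Real.log m) / lam := by
    intro lam hlam
    obtain ⟨hs, -, hsmin⟩ := hπs lam hlam
    have hW : cost c πW ≤ cost c (πs lam) := hπWmin _ hs
    have hF : Fobj lam c (πs lam) ≤ Fobj lam c πW :=
      Fobj_le_of_le_on_pos_couplings hsmin hQ hQpos hπW
    have hsL := entM_le_log_add_log hs.1 (hs.sum_sum_eq_one hp1)
    exact ⟨abs_cost_sub_cost_le hlam hW hF hπW0 hsL, abs_cost_sub_Fobj_le hlam hW hF hπW0 hsL⟩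
  exact ⟨bounds, tendsto_of_abs_sub_le_div fun lam hlam ↦ (bounds lam hlam).1,
    tendsto_of_abs_sub_le_div fun lam hlam ↦ (abs_sub_comm _ _).trans_le (bounds lam hlam).2⟩

/-- Both Sinkhorn divergences converge to the Wasserstein cost as `λ → ∞`, with rate
`(log n + log ñ)/λ`. -/
theorem sinkhorn_tendsto_wasserstein {n m : ℕ} (hn : 1 ≤ n) (hm : 1 ≤ m)
    (p : Fin n → ℝ) (pt : Fin m → ℝ)
    (hp0 : ∀ i, 0 ≤ p i) (hpt0 : ∀ j, 0 ≤ pt j)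
    (hp1 : ∑ i, p i = 1) (hpt1 : ∑ j, pt j = 1)
    (c : Fin n → Fin m → ℝ) (hc : ∀ i j, 0 ≤ c i j)
    (πW : Fin n → Fin m → ℝ)
    (hπW : IsCoupling p pt πW)
    (hπWmin : ∀ π, IsCoupling p pt π → cost c πW ≤ cost c π)
    (πs : ℝ → Fin n → Fin m → ℝ)
    (hπs : ∀ lam > (0 : ℝ), IsCoupling p pt (πs lam) ∧ (∀ i j, 0 < πs lam i j) ∧
      ∀ π, IsCoupling p pt π → (∀ i j, 0 < π i j) →
        Fobj lam c (πs lam) ≤ Fobj lam c π) :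
    (∀ lam > (0 : ℝ),
        |cost c (πs lam) - cost c πW| ≤ (Real.log n + Real.log m) / lam ∧
        |cost c πW - Fobj lam c (πs lam)| ≤ (Real.log n + Real.log m) / lam) ∧
      Filter.Tendsto (fun lam => cost c (πs lam)) Filter.atTop (nhds (cost c πW)) ∧
      Filter.Tendsto (fun lam => Fobj lam c (πs lam)) Filter.atTop (nhds (cost c πW)) :=
  sinkhorn_tendsto_wasserstein_general p pt hp1 c πW hπW hπWmin πs hπs
end

section
/- First-order conditions of the dual: if strictly positive vectors α ∈ ℝ^n and α̃ ∈ ℝ^ñ maximize the dual function d over all strictly positive vectors, then α_i ∑_j k_ij α̃_j = p_i for all i and α̃_j ∑_i k_ij α_i = p̃_j for all j, where k_ij = e^{-λ c_ij}. -/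
/-!
Scaling a single coordinate `α i ↦ α i * x` changes `λ · d` by
`p i * log x - (x - 1) * α i * S i`, where `S i = ∑ j, exp (-λ c i j) * α̃ j`. Maximality at `x = 1`
makes `1` a critical point of this function of `x`, i.e. `α i * S i = p i`. The conditions on `α̃`
follow by the symmetry of `d` under transposing `c`.
-/

open Finset

/-- The dual function of the Sinkhorn problem. -/
noncomputable def dual {n m : ℕ} (lam : ℝ) (c : Fin n → Fin m → ℝ)
    (p : Fin n → ℝ) (pt : Fin m → ℝ) (α : Fin n → ℝ) (αt : Fin m → ℝ) : ℝ :=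
  1 / lam + (1 / lam) * ∑ i, p i * Real.log (α i)
    + (1 / lam) * ∑ j, pt j * Real.log (αt j)
    - (1 / lam) * ∑ i, ∑ j, α i * Real.exp (-lam * c i j) * αt j

/-- `x ↦ q (x - 1) - p log x` has a minimum at `1`, where its derivative is `q - p`. -/
theorem eq_of_mul_log_le_mul_sub_one {p q : ℝ}
    (h : ∀ x : ℝ, 0 < x → p * Real.log x ≤ q * (x - 1)) : q = p := by
  have hmin : IsLocalMin (fun x : ℝ => q * (x - 1) - p * Real.log x) 1 := by
    filter_upwards [eventually_gt_nhds one_pos] with x hx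
    simp only [Real.log_one, mul_zero, sub_self]
    linarith [h x hx]
  have hderiv : HasDerivAt (fun x : ℝ => q * (x - 1) - p * Real.log x) (q * 1 - p * 1⁻¹) 1 :=
    (((hasDerivAt_id 1).sub_const 1).const_mul q).sub
      ((Real.hasDerivAt_log one_ne_zero).const_mul p)
  have := hmin.hasDerivAt_eq_zero hderiv
  simp only [mul_one, inv_one] at this
  linarith

theorem Finset.sum_update_sub_sum {ι M : Type*} [Fintype ι] [DecidableEq ι] [AddCommGroup M]
    {β : Type*} (f : ι → β → M) (a : ι → β) (i : ι) (b : β) :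
    ∑ k, f k (Function.update a i b k) - ∑ k, f k (a k) = f i b - f i (a i) := by
  rw [← sum_sub_distrib, sum_eq_single i]
  · simp
  · intro k _ hk
    simp [Function.update_of_ne hk]
  · simp

theorem dual_swap {n m : ℕ} (lam : ℝ) (c : Fin n → Fin m → ℝ)
    (p : Fin n → ℝ) (pt : Fin m → ℝ) (α : Fin n → ℝ) (αt : Fin m → ℝ) :
    dual lam c p pt α αt = dual lam (fun j i => c i j) pt p αt α := by
  unfold dual
  rw [sum_comm (f := fun i j => α i * Real.exp (-lam * c i j) * αt j)]
  simp only [mul_comm, mul_left_comm]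
  ring

theorem dual_eq_sum_row {n m : ℕ} (lam : ℝ) (c : Fin n → Fin m → ℝ)
    (p : Fin n → ℝ) (pt : Fin m → ℝ) (α : Fin n → ℝ) (αt : Fin m → ℝ) :
    dual lam c p pt α αt = 1 / lam + (1 / lam) * ∑ j, pt j * Real.log (αt j)
      + (1 / lam) * ∑ i, (p i * Real.log (α i) - α i * ∑ j, Real.exp (-lam * c i j) * αt j) := by
  have hcoupling : ∑ i, α i * ∑ j, Real.exp (-lam * c i j) * αt j
      = ∑ i, ∑ j, α i * Real.exp (-lam * c i j) * αt j := by
    simp_rw [mul_sum, mul_assoc]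
  unfold dual
  rw [sum_sub_distrib, hcoupling]
  ring

theorem dual_row_fixed_point {n m : ℕ} {lam : ℝ} (hlam : 0 < lam) {c : Fin n → Fin m → ℝ}
    {p : Fin n → ℝ} {pt : Fin m → ℝ} {α : Fin n → ℝ} {αt : Fin m → ℝ} (hα : ∀ i, 0 < α i)
    (hmax : ∀ β : Fin n → ℝ, (∀ i, 0 < β i) → dual lam c p pt β αt ≤ dual lam c p pt α αt)
    (i : Fin n) : α i * ∑ j, Real.exp (-lam * c i j) * αt j = p i := by
  set row : Fin n → ℝ → ℝ := fun k t => p k * Real.log t - t * ∑ j, Real.exp (-lam * c k j) * αt j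
  apply eq_of_mul_log_le_mul_sub_one
  intro x hx
  have hβ : ∀ k, 0 < Function.update α i (α i * x) k :=
    Function.forall_update_iff _ (p := fun _ t => 0 < t) |>.mpr
      ⟨mul_pos (hα i) hx, fun k _ => hα k⟩
  have hle := hmax _ hβ
  rw [dual_eq_sum_row, dual_eq_sum_row] at hle
  have hrow : ∑ k, row k (Function.update α i (α i * x) k) ≤ ∑ k, row k (α k) :=
    le_of_mul_le_mul_left (by linarith) (one_div_pos.mpr hlam)
  have hdrop := sub_nonpos.mpr hrow
  rw [sum_update_sub_sum row] at hdrop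
  simp only [row, Real.log_mul (hα i).ne' hx.ne'] at hdrop
  linarith

theorem dual_maximizer_fixed_point_general {n m : ℕ}
    (p : Fin n → ℝ) (pt : Fin m → ℝ)
    (c : Fin n → Fin m → ℝ)
    (lam : ℝ) (hlam : 0 < lam)
    (α : Fin n → ℝ) (αt : Fin m → ℝ)
    (hα : ∀ i, 0 < α i) (hαt : ∀ j, 0 < αt j)
    (hmax : ∀ (β : Fin n → ℝ) (βt : Fin m → ℝ), (∀ i, 0 < β i) → (∀ j, 0 < βt j) →
      dual lam c p pt β βt ≤ dual lam c p pt α αt) :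
    (∀ i, α i * ∑ j, Real.exp (-lam * c i j) * αt j = p i) ∧
      (∀ j, αt j * ∑ i, Real.exp (-lam * c i j) * α i = pt j) :=
  ⟨dual_row_fixed_point hlam hα fun β hβ => hmax β αt hβ hαt,
    dual_row_fixed_point (c := fun j i => c i j) (pt := p) hlam hαt fun βt hβt => by
      simpa only [dual_swap lam c p pt α] using hmax α βt hα hβt⟩

/-- First-order conditions of the dual: maximizers of the dual function over strictly
positive vectors satisfy the Sinkhorn fixed-point equations for `kᵢⱼ = exp(-λ cᵢⱼ)`. -/
theorem dual_maximizer_fixed_point {n m : ℕ} (hn : 1 ≤ n) (hm : 1 ≤ m)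
    (p : Fin n → ℝ) (pt : Fin m → ℝ)
    (hp0 : ∀ i, 0 ≤ p i) (hpt0 : ∀ j, 0 ≤ pt j)
    (hp1 : ∑ i, p i = 1) (hpt1 : ∑ j, pt j = 1)
    (c : Fin n → Fin m → ℝ) (hc : ∀ i j, 0 ≤ c i j)
    (lam : ℝ) (hlam : 0 < lam)
    (α : Fin n → ℝ) (αt : Fin m → ℝ)
    (hα : ∀ i, 0 < α i) (hαt : ∀ j, 0 < αt j)
    (hmax : ∀ (β : Fin n → ℝ) (βt : Fin m → ℝ), (∀ i, 0 < β i) → (∀ j, 0 < βt j) →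
      dual lam c p pt β βt ≤ dual lam c p pt α αt) :
    (∀ i, α i * ∑ j, Real.exp (-lam * c i j) * αt j = p i) ∧
      (∀ j, αt j * ∑ i, Real.exp (-lam * c i j) * α i = pt j) :=
  dual_maximizer_fixed_point_general p pt c lam hlam α αt hα hαt hmax
end

section
/- One Sinkhorn update decreases the objective f by a Kullback–Leibler divergence (Lemma 3.8, even-step case): let k̃ ∈ ℝ^{n×ñ} have strictly positive entries, let α ∈ ℝ^n, α̃ ∈ ℝ^ñ be strictly positive, set π_ij = α_i k̃_ij α̃_j, and assume the column sums satisfy ∑_i π_ij = p̃_j for all j. Define the updated vector α'_i = p_i / (∑_j k̃_ij α̃_j). Then f(α, α̃) - f(α', α̃) = D_KL(p | q) where q_i = ∑_j π_ij are the row sums of π (and the analogous identity holds for the update of α̃ when the row sums of π equal p). -/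
open Finset

/-- The matrix-scaling objective `f(α, α̃)`. -/
noncomputable def fobj {n m : ℕ} (p : Fin n → ℝ) (pt : Fin m → ℝ)
    (kt : Fin n → Fin m → ℝ) (α : Fin n → ℝ) (αt : Fin m → ℝ) : ℝ :=
  ∑ i, ∑ j, α i * kt i j * αt j
    - ∑ i, p i * Real.log (α i) - ∑ j, pt j * Real.log (αt j)

/-- Kullback–Leibler divergence (convention `0 * log 0 = 0` holds since `Real.log 0 = 0`). -/
noncomputable def DKL {ι : Type*} [Fintype ι] (u v : ι → ℝ) : ℝ :=
  ∑ i, u i * Real.log (u i / v i)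

/-- One Sinkhorn update decreases the objective `f` by a Kullback–Leibler divergence
(Lemma 3.8, even-step case). -/
theorem sinkhorn_step_decreases_by_KL {n m : ℕ} (hn : 1 ≤ n) (hm : 1 ≤ m)
    (p : Fin n → ℝ) (pt : Fin m → ℝ)
    (hp0 : ∀ i, 0 ≤ p i) (hpt0 : ∀ j, 0 ≤ pt j)
    (hp1 : ∑ i, p i = 1) (hpt1 : ∑ j, pt j = 1)
    (kt : Fin n → Fin m → ℝ) (hkt : ∀ i j, 0 < kt i j)
    (α : Fin n → ℝ) (αt : Fin m → ℝ)
    (hα : ∀ i, 0 < α i) (hαt : ∀ j, 0 < αt j)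
    (π : Fin n → Fin m → ℝ) (hπ : ∀ i j, π i j = α i * kt i j * αt j)
    (hcol : ∀ j, ∑ i, π i j = pt j) :
    fobj p pt kt α αt - fobj p pt kt (fun i => p i / ∑ j, kt i j * αt j) αt =
      DKL p (fun i => ∑ j, π i j) := by
  have hspos : ∀ i, 0 < ∑ j, kt i j * αt j := fun i =>
    Finset.sum_pos (fun j _ => mul_pos (hkt i j) (hαt j)) ⟨⟨0, hm⟩, Finset.mem_univ _⟩
  have hq : ∀ i, ∑ j, π i j = α i * ∑ j, kt i j * αt j := by
    intro i
    rw [Finset.mul_sum]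
    refine Finset.sum_congr rfl fun j _ => ?_
    rw [hπ]; ring
  have hsum1 : ∑ i, ∑ j, α i * kt i j * αt j = 1 := by
    have h1 : ∑ i, ∑ j, α i * kt i j * αt j = ∑ j, ∑ i, π i j := by
      rw [Finset.sum_comm]
      exact Finset.sum_congr rfl fun j _ => Finset.sum_congr rfl fun i _ => (hπ i j).symm
    rw [h1]
    simp [hcol, hpt1]
  have hsum2 : ∑ i, ∑ j, (p i / ∑ j', kt i j' * αt j') * kt i j * αt j = 1 := by
    have h2 : ∀ i, ∑ j, (p i / ∑ j', kt i j' * αt j') * kt i j * αt j = p i := by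
      intro i
      have : ∑ j, (p i / ∑ j', kt i j' * αt j') * kt i j * αt j
          = (p i / ∑ j', kt i j' * αt j') * ∑ j, kt i j * αt j := by
        rw [Finset.mul_sum]
        exact Finset.sum_congr rfl fun j _ => by ring
      rw [this, div_mul_cancel₀ _ (hspos i).ne']
    simp [h2, hp1]
  have key : ∀ i, p i * Real.log (p i / ∑ j, kt i j * αt j) - p i * Real.log (α i)
      = p i * Real.log (p i / ∑ j, π i j) := by
    intro i
    rcases eq_or_lt_of_le (hp0 i) with h0 | hpos
    · simp [← h0]
    · rw [hq i, Real.log_div hpos.ne' (hspos i).ne',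
        Real.log_div hpos.ne' (mul_pos (hα i) (hspos i)).ne',
        Real.log_mul (hα i).ne' (hspos i).ne']
      ring
  unfold fobj DKL
  rw [hsum1, hsum2]
  have : ∑ i, p i * Real.log (p i / ∑ j, π i j)
      = ∑ i, (p i * Real.log (p i / ∑ j, kt i j * αt j) - p i * Real.log (α i)) := by
    exact Finset.sum_congr rfl fun i _ => (key i).symm
  rw [this, Finset.sum_sub_distrib]
  ring
end

section
/- Lemma 3.9 core inequality: let p ∈ ℝ^n, p̃ ∈ ℝ^ñ be probability vectors, let k̃ ∈ ℝ^{n×ñ} be a matrix all of whose entries are at least ȷ > 0, and let α ∈ ℝ^n, α̃ ∈ ℝ^ñ be strictly positive vectors. Then ∑_i p_i log α_i + ∑_j p̃_j log α̃_j ≤ log((∑_{ij} α_i k̃_ij α̃_j)/ȷ). In particular, if moreover ∑_{ij} k̃_ij = ∑_{ij} α_i k̃_ij α̃_j =: κ, then f(1_n, 1_ñ) - f(α, α̃) ≤ log(κ/ȷ). -/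
open Finset

/-! Since every `α i ≤ ∑ α`, the `p`-average of `log α i` is at most `log (∑ α)`, and likewise
for `α̃`; and `ȷ (∑ α) (∑ α̃) ≤ ∑ α_i k̃_ij α̃_j` entrywise. When both double sums equal `κ`, the
quadratic terms of `f(1, 1) - f(α, α̃)` cancel and the gap is exactly the weighted log sum. -/

theorem sum_mul_log_le_log_sum {ι : Type*} [Fintype ι] {w x : ι → ℝ}
    (hw : ∀ i, 0 ≤ w i) (hw1 : ∑ i, w i = 1) (hx : ∀ i, 0 < x i) :
    ∑ i, w i * Real.log (x i) ≤ Real.log (∑ i, x i) :=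
  calc ∑ i, w i * Real.log (x i) ≤ ∑ i, w i * Real.log (∑ i, x i) := by
        gcongr with i
        · exact hw i
        · exact hx i
        · exact single_le_sum (fun i _ => (hx i).le) (mem_univ i)
    _ = Real.log (∑ i, x i) := by rw [← sum_mul, hw1, one_mul]

theorem sum_pos_of_sum_eq_one {ι : Type*} [Fintype ι] {w x : ι → ℝ}
    (hw1 : ∑ i, w i = 1) (hx : ∀ i, 0 < x i) : 0 < ∑ i, x i := by
  refine sum_pos (fun i _ => hx i) (univ_nonempty_iff.mpr ?_)
  by_contra h
  rw [not_nonempty_iff] at h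
  simp at hw1

theorem mul_sum_mul_sum_le_sum_sum_mul_mul {ι κ : Type*} [Fintype ι] [Fintype κ]
    {c : ℝ} {k : ι → κ → ℝ} {a : ι → ℝ} {b : κ → ℝ} (hk : ∀ i j, c ≤ k i j)
    (ha : ∀ i, 0 ≤ a i) (hb : ∀ j, 0 ≤ b j) :
    c * ((∑ i, a i) * ∑ j, b j) ≤ ∑ i, ∑ j, a i * k i j * b j :=
  calc c * ((∑ i, a i) * ∑ j, b j) = ∑ i, ∑ j, a i * c * b j := by
        rw [sum_mul_sum, mul_sum]
        exact sum_congr rfl fun i _ => by rw [mul_sum]; exact sum_congr rfl fun j _ => by ring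
    _ ≤ ∑ i, ∑ j, a i * k i j * b j := by
        gcongr with i _ j _
        · exact hb j
        · exact ha i
        · exact hk i j

theorem fobj_one_sub_fobj {n m : ℕ} (p : Fin n → ℝ) (pt : Fin m → ℝ)
    (kt : Fin n → Fin m → ℝ) (α : Fin n → ℝ) (αt : Fin m → ℝ) :
    fobj p pt kt (fun _ => 1) (fun _ => 1) - fobj p pt kt α αt =
      (∑ i, ∑ j, kt i j) - (∑ i, ∑ j, α i * kt i j * αt j)
        + (∑ i, p i * Real.log (α i) + ∑ j, pt j * Real.log (αt j)) := by
  simp only [fobj, one_mul, mul_one, Real.log_one, mul_zero, sum_const_zero]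
  ring

theorem sum_mul_log_add_sum_mul_log_le_log_div {ι κ : Type*} [Fintype ι] [Fintype κ]
    {p : ι → ℝ} {pt : κ → ℝ} (hp0 : ∀ i, 0 ≤ p i) (hpt0 : ∀ j, 0 ≤ pt j)
    (hp1 : ∑ i, p i = 1) (hpt1 : ∑ j, pt j = 1) {c : ℝ} (hc : 0 < c)
    {k : ι → κ → ℝ} (hk : ∀ i j, c ≤ k i j) {a : ι → ℝ} {b : κ → ℝ}
    (ha : ∀ i, 0 < a i) (hb : ∀ j, 0 < b j) :
    ∑ i, p i * Real.log (a i) + ∑ j, pt j * Real.log (b j) ≤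
      Real.log ((∑ i, ∑ j, a i * k i j * b j) / c) := by
  have hA := sum_pos_of_sum_eq_one hp1 ha
  have hB := sum_pos_of_sum_eq_one hpt1 hb
  calc ∑ i, p i * Real.log (a i) + ∑ j, pt j * Real.log (b j)
      ≤ Real.log (∑ i, a i) + Real.log (∑ j, b j) :=
        add_le_add (sum_mul_log_le_log_sum hp0 hp1 ha) (sum_mul_log_le_log_sum hpt0 hpt1 hb)
    _ = Real.log ((∑ i, a i) * ∑ j, b j) := (Real.log_mul hA.ne' hB.ne').symm
    _ ≤ Real.log ((∑ i, ∑ j, a i * k i j * b j) / c) := by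
        refine Real.log_le_log (mul_pos hA hB) ((le_div_iff₀' hc).mpr ?_)
        exact mul_sum_mul_sum_le_sum_sum_mul_mul hk (fun i => (ha i).le) (fun j => (hb j).le)

theorem fobj_gap_le_log_general {n m : ℕ}
    (p : Fin n → ℝ) (pt : Fin m → ℝ)
    (hp0 : ∀ i, 0 ≤ p i) (hpt0 : ∀ j, 0 ≤ pt j)
    (hp1 : ∑ i, p i = 1) (hpt1 : ∑ j, pt j = 1)
    (j0 : ℝ) (hj0 : 0 < j0)
    (kt : Fin n → Fin m → ℝ) (hkt : ∀ i j, j0 ≤ kt i j)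
    (α : Fin n → ℝ) (αt : Fin m → ℝ)
    (hα : ∀ i, 0 < α i) (hαt : ∀ j, 0 < αt j) :
    (∑ i, p i * Real.log (α i) + ∑ j, pt j * Real.log (αt j) ≤
        Real.log ((∑ i, ∑ j, α i * kt i j * αt j) / j0)) ∧
      ∀ κ : ℝ, (∑ i, ∑ j, kt i j) = κ → (∑ i, ∑ j, α i * kt i j * αt j) = κ →
        fobj p pt kt (fun _ => 1) (fun _ => 1) - fobj p pt kt α αt ≤
          Real.log (κ / j0) := by
  have hcore := sum_mul_log_add_sum_mul_log_le_log_div hp0 hpt0 hp1 hpt1 hj0 hkt hα hαt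
  refine ⟨hcore, fun κ hk hαk => ?_⟩
  rw [fobj_one_sub_fobj, hk, hαk, sub_self, zero_add, ← hαk]
  exact hcore

/-- Lemma 3.9 core inequality and, in particular, the bound
`f(1ₙ, 1ₘ) - f(α, α̃) ≤ log (κ/ȷ)`. -/
theorem fobj_gap_le_log {n m : ℕ} (hn : 1 ≤ n) (hm : 1 ≤ m)
    (p : Fin n → ℝ) (pt : Fin m → ℝ)
    (hp0 : ∀ i, 0 ≤ p i) (hpt0 : ∀ j, 0 ≤ pt j)
    (hp1 : ∑ i, p i = 1) (hpt1 : ∑ j, pt j = 1)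
    (j0 : ℝ) (hj0 : 0 < j0)
    (kt : Fin n → Fin m → ℝ) (hkt : ∀ i j, j0 ≤ kt i j)
    (α : Fin n → ℝ) (αt : Fin m → ℝ)
    (hα : ∀ i, 0 < α i) (hαt : ∀ j, 0 < αt j) :
    (∑ i, p i * Real.log (α i) + ∑ j, pt j * Real.log (αt j) ≤
        Real.log ((∑ i, ∑ j, α i * kt i j * αt j) / j0)) ∧
      ∀ κ : ℝ, (∑ i, ∑ j, kt i j) = κ → (∑ i, ∑ j, α i * kt i j * αt j) = κ →
        fobj p pt kt (fun _ => 1) (fun _ => 1) - fobj p pt kt α αt ≤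
          Real.log (κ / j0) :=
  fobj_gap_le_log_general p pt hp0 hpt0 hp1 hpt1 j0 hj0 kt hkt α αt hα hαt
end
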